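/- Let M and Y be metric spaces equipped with Borel measures μ and ν, let f : M → Y be continuous and R ≥ 0, and let V : L²(M,μ;ℂ) → L²(Y,ν;ℂ) be a continuous linear map which covers f with propagation R: for every s ∈ L²(μ) and every closed C ⊆ M with s = 0 μ-a.e. outside C, one has Vs = 0 ν-a.e. outside U_R(f(C)). Let T₁, T₂ : L²(μ) → L²(μ) be continuous linear maps and D ⊆ Y a closed set, and assume T₁ s = T₂ s for every s ∈ L²(μ) with s = 0 μ-a.e. outside f⁻¹(U_R(D)). Then for every u ∈ L²(ν) with u = 0 ν-a.e. outside D one has V T₁ V* u = V T₂ V* u. -/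

import Mathlib

/-!
Write `s = V* u`. Every point outside `f⁻¹(U_R(D))` lies in one of the closed sets `Kₙ` of
points that `f` maps at distance `≥ εₙ` from `D`, where `εₙ ↓ R`. If `t` is supported in `Kₙ`,
then `V t` is supported in `U_R(f(Kₙ))`, which misses `D`, so `⟪t, s⟫ = ⟪V t, u⟫ = 0`.
Taking `t = 𝟙_{Kₙ} s` gives `‖𝟙_{Kₙ} s‖² = 0`, so `s` vanishes outside `f⁻¹(U_R(D))` and
`T₁ s = T₂ s`.
-/

open MeasureTheory Metric Set

namespace Metric

variable {X : Type*} [PseudoMetricSpace X]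

theorem disjoint_cthickening_of_disjoint_thickening {R ε : ℝ} {S D : Set X} (hε : 0 < ε)
    (hRε : R < ε) (h : Disjoint S (thickening ε D)) : Disjoint (cthickening R S) D := by
  refine Disjoint.mono_left (cthickening_subset_thickening' hε hRε S) ?_
  refine Set.disjoint_left.2 fun y hy hyD => ?_
  obtain ⟨z, hzS, hyz⟩ := mem_thickening_iff.1 hy
  exact Set.disjoint_left.1 h hzS (mem_thickening_iff.2 ⟨y, hyD, by rwa [dist_comm]⟩)

theorem cthickening_eq_iInter_thickening_nat (R : ℝ) (D : Set X) :
    cthickening R D = ⋂ n : ℕ, thickening (max 0 R + 1 / (n + 1)) D := by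
  rw [← cthickening_max_zero, cthickening_eq_iInter_thickening' (le_max_left 0 R)
    (range fun n : ℕ => max 0 R + 1 / (n + 1)), biInter_range]
  · rintro _ ⟨n, rfl⟩
    simp only [mem_Ioi, lt_add_iff_pos_right]
    positivity
  · intro ε hε
    obtain ⟨n, hn⟩ := exists_nat_one_div_lt (sub_pos.2 hε)
    exact ⟨_, mem_range_self n, lt_add_of_pos_right _ (by positivity), by linarith⟩

end Metric

namespace MeasureTheory.L2

variable {α 𝕜 E : Type*} [MeasurableSpace α] {μ : Measure α} [RCLike 𝕜]
  [NormedAddCommGroup E] [InnerProductSpace 𝕜 E]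

theorem inner_eq_zero_of_disjoint {A B : Set α} (hAB : Disjoint A B) {s t : Lp E 2 μ}
    (hs : ∀ᵐ x ∂μ, x ∉ A → s x = 0) (ht : ∀ᵐ x ∂μ, x ∉ B → t x = 0) :
    inner 𝕜 s t = 0 := by
  rw [inner_def]
  refine integral_eq_zero_of_ae ?_
  filter_upwards [hs, ht] with x hsx htx
  by_cases hxA : x ∈ A
  · simp [htx (Set.disjoint_left.1 hAB hxA)]
  · simp [hsx hxA]

theorem ae_eq_zero_on_of_forall_inner_eq_zero {K : Set α} (hK : MeasurableSet K)
    {s : Lp E 2 μ} (h : ∀ t : Lp E 2 μ, (∀ᵐ x ∂μ, x ∉ K → t x = 0) → inner 𝕜 t s = 0) :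
    ∀ᵐ x ∂μ, x ∈ K → s x = 0 := by
  set t : Lp E 2 μ := ((Lp.memLp s).indicator hK).toLp _
  have ht : t =ᵐ[μ] K.indicator s := MemLp.coeFn_toLp _
  have ht_out : ∀ᵐ x ∂μ, x ∉ K → t x = 0 := by
    filter_upwards [ht] with x hx hxK
    rw [hx, indicator_of_notMem hxK]
  have hst_in : ∀ᵐ x ∂μ, x ∉ Kᶜ → (s - t) x = 0 := by
    filter_upwards [ht, Lp.coeFn_sub s t] with x hx hsub hxK
    rw [hsub, Pi.sub_apply, hx, indicator_of_mem (not_not.1 hxK), sub_self]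
  have ht0 : t = 0 := by
    rw [← inner_self_eq_zero (𝕜 := 𝕜)]
    calc inner 𝕜 t t = inner 𝕜 t s - inner 𝕜 t (s - t) := by
          rw [inner_sub_right, sub_sub_cancel]
      _ = 0 := by
        rw [h t ht_out, inner_eq_zero_of_disjoint disjoint_compl_right ht_out hst_in, sub_zero]
  filter_upwards [ht, ht0 ▸ Lp.coeFn_zero E 2 μ] with x hx h0 hxK
  rw [← indicator_of_mem hxK s, ← hx, h0, Pi.zero_apply]

end MeasureTheory.L2

section Propagation

variable {M Y 𝕜 E F : Type*} [TopologicalSpace M] [MeasurableSpace M]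
  [PseudoMetricSpace Y] [MeasurableSpace Y] {μ : Measure M} {ν : Measure Y} [RCLike 𝕜]
  [NormedAddCommGroup E] [InnerProductSpace 𝕜 E] [NormedAddCommGroup F] [InnerProductSpace 𝕜 F]

def CoversWithPropagation (V : Lp E 2 μ →L[𝕜] Lp F 2 ν) (f : M → Y) (R : ℝ) : Prop :=
  ∀ (s : Lp E 2 μ) (C : Set M), IsClosed C → (∀ᵐ p ∂μ, p ∉ C → s p = 0) →
    ∀ᵐ y ∂ν, y ∉ cthickening R (f '' C) → V s y = 0

variable [OpensMeasurableSpace M] [CompleteSpace E] [CompleteSpace F]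

theorem CoversWithPropagation.adjoint_apply_vanishes_outside_preimage
    {V : Lp E 2 μ →L[𝕜] Lp F 2 ν} {f : M → Y} {R : ℝ} (hV : CoversWithPropagation V f R)
    (hf : Continuous f) {D : Set Y} {u : Lp F 2 ν} (hu : ∀ᵐ y ∂ν, y ∉ D → u y = 0) :
    ∀ᵐ p ∂μ, p ∉ f ⁻¹' cthickening R D → V.adjoint u p = 0 := by
  set ε : ℕ → ℝ := fun n => max 0 R + 1 / (n + 1)
  have hε_pos (n : ℕ) : 0 < ε n := by positivity
  have hR_lt (n : ℕ) : R < ε n :=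
    (le_max_right 0 R).trans_lt (lt_add_of_pos_right _ (by positivity))
  have h_far (n : ℕ) : ∀ᵐ p ∂μ, p ∈ f ⁻¹' (thickening (ε n) D)ᶜ → V.adjoint u p = 0 := by
    have hK : IsClosed (f ⁻¹' (thickening (ε n) D)ᶜ) :=
      isOpen_thickening.isClosed_compl.preimage hf
    refine L2.ae_eq_zero_on_of_forall_inner_eq_zero (𝕜 := 𝕜) hK.measurableSet fun t ht => ?_
    have h_disj : Disjoint (cthickening R (f '' (f ⁻¹' (thickening (ε n) D)ᶜ))) D :=
      disjoint_cthickening_of_disjoint_thickening (hε_pos n) (hR_lt n)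
        (disjoint_compl_left.mono_left (image_preimage_subset _ _))
    rw [ContinuousLinearMap.adjoint_inner_right]
    exact L2.inner_eq_zero_of_disjoint h_disj (hV t _ hK ht) hu
  filter_upwards [ae_all_iff.2 h_far] with p hp hpD
  rw [cthickening_eq_iInter_thickening_nat, preimage_iInter, mem_iInter, not_forall] at hpD
  obtain ⟨n, hn⟩ := hpD
  exact hp n hn

end Propagation

open MeasureTheory Metric in
theorem stmt15_general {M Y : Type*} [MetricSpace M] [MetricSpace Y]
    [MeasurableSpace M] [BorelSpace M] [MeasurableSpace Y] [BorelSpace Y]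
    (μ : Measure M) (ν : Measure Y) (f : M → Y) (hf : Continuous f)
    (R : ℝ)
    (V : Lp ℂ 2 μ →L[ℂ] Lp ℂ 2 ν)
    (hV : ∀ (s : Lp ℂ 2 μ) (C : Set M), IsClosed C →
      (∀ᵐ p ∂μ, p ∉ C → s p = 0) →
      (∀ᵐ y ∂ν, y ∉ cthickening R (f '' C) → V s y = 0))
    (T₁ T₂ : Lp ℂ 2 μ →L[ℂ] Lp ℂ 2 μ)
    (D : Set Y)
    (hT : ∀ s : Lp ℂ 2 μ,
      (∀ᵐ p ∂μ, p ∉ f ⁻¹' (cthickening R D) → s p = 0) → T₁ s = T₂ s)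
    (u : Lp ℂ 2 ν) (hu : ∀ᵐ y ∂ν, y ∉ D → u y = 0) :
    V (T₁ ((ContinuousLinearMap.adjoint V) u)) =
      V (T₂ ((ContinuousLinearMap.adjoint V) u)) := by
  rw [hT _ (CoversWithPropagation.adjoint_apply_vanishes_outside_preimage hV hf hu)]

open MeasureTheory Metric in
/-- Localization: if `V : L²(μ) → L²(ν)` covers `f` with propagation `R` and
the operators `T₁, T₂` agree on all sections supported in `f⁻¹(U_R(D))`, then
`V T₁ V* u = V T₂ V* u` for every `u` supported in the closed set `D`. -/
theorem stmt15 {M Y : Type*} [MetricSpace M] [MetricSpace Y]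
    [MeasurableSpace M] [BorelSpace M] [MeasurableSpace Y] [BorelSpace Y]
    (μ : Measure M) (ν : Measure Y) (f : M → Y) (hf : Continuous f)
    (R : ℝ) (hR : 0 ≤ R)
    (V : Lp ℂ 2 μ →L[ℂ] Lp ℂ 2 ν)
    (hV : ∀ (s : Lp ℂ 2 μ) (C : Set M), IsClosed C →
      (∀ᵐ p ∂μ, p ∉ C → s p = 0) →
      (∀ᵐ y ∂ν, y ∉ cthickening R (f '' C) → V s y = 0))
    (T₁ T₂ : Lp ℂ 2 μ →L[ℂ] Lp ℂ 2 μ)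
    (D : Set Y) (hD : IsClosed D)
    (hT : ∀ s : Lp ℂ 2 μ,
      (∀ᵐ p ∂μ, p ∉ f ⁻¹' (cthickening R D) → s p = 0) → T₁ s = T₂ s)
    (u : Lp ℂ 2 ν) (hu : ∀ᵐ y ∂ν, y ∉ D → u y = 0) :
    V (T₁ ((ContinuousLinearMap.adjoint V) u)) =
      V (T₂ ((ContinuousLinearMap.adjoint V) u)) :=
  stmt15_general μ ν f hf R V hV T₁ T₂ D hT u hu
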